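/- For fixed λ ≠ 0 and weights α, β ≥ 0 with α + β = 1, define H_{λ,α,β}(a,b) := (1/λ)·log(α·e^{λa} + β·e^{λb}). Then H_{λ,α,β}(a,b) = (a+b)/2 + h(b−a), where h(u) := (1/(2λ))·[log(α + β·e^{λu}) + log(β + α·e^{−λu})] satisfies h(0) = 0 and |h'(u)| ≤ 1 for all u ∈ ℝ; in particular h is 1-Lipschitz. -/

import Mathlib

/-!
Since `β + α e^{-λu} = e^{-λu} (α + β e^{λu})`, the function `h` is `u ↦ g u - u / 2` with
`g u = λ⁻¹ log (α + β e^{λu})`, and factoring `e^{λa}` out of `α e^{λa} + β e^{λb}` gives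
`H(a, b) = a + g (b - a)`, which is the decomposition. The derivative `g' u = p` is the weight
`p = β e^{λu} / (α + β e^{λu}) ∈ [0, 1]`, so `|h'| = |p - 1/2| ≤ 1/2`.
-/

open Real

lemma log_add_mul_exp_neg {α β : ℝ} (t : ℝ) (h : α + β * exp t ≠ 0) :
    log (β + α * exp (-t)) = log (α + β * exp t) - t := by
  have hfactor : β + α * exp (-t) = exp (-t) * (α + β * exp t) := by
    rw [mul_add, ← mul_assoc, mul_comm (exp (-t)) β, mul_assoc, ← exp_add, neg_add_cancel,
      exp_zero]
    ring
  rw [hfactor, log_mul (exp_ne_zero _) h, log_exp]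
  ring

lemma log_mul_exp_add_mul_exp {α β : ℝ} (x y : ℝ) (h : α + β * exp (y - x) ≠ 0) :
    log (α * exp x + β * exp y) = x + log (α + β * exp (y - x)) := by
  have hfactor : α * exp x + β * exp y = exp x * (α + β * exp (y - x)) := by
    rw [mul_add, ← mul_assoc, mul_comm (exp x) β, mul_assoc, ← exp_add, add_sub_cancel]
    ring
  rw [hfactor, log_mul (exp_ne_zero _) h, log_exp]

lemma hasDerivAt_log_add_mul_exp {α β : ℝ} (l u : ℝ) (h : α + β * exp (l * u) ≠ 0) :
    HasDerivAt (fun u => log (α + β * exp (l * u)))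
      (l * (β * exp (l * u) / (α + β * exp (l * u)))) u := by
  have hexp : HasDerivAt (fun u => α + β * exp (l * u)) (β * (exp (l * u) * l)) u :=
    (((hasDerivAt_id u).const_mul l).exp.const_mul β).const_add α |>.congr_deriv (by simp)
  convert hexp.log h using 1
  ring

lemma abs_div_add_sub_half_le {x y : ℝ} (hx : 0 < x) (hy : 0 ≤ y) :
    |y / (x + y) - 1 / 2| ≤ 1 / 2 := by
  have hxy : 0 < x + y := by linarith
  rw [abs_le, div_sub' hxy.ne', le_div_iff₀ hxy, div_le_iff₀ hxy]
  constructor <;> linarith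

theorem stmt2 (l : ℝ) (hl : l ≠ 0) (α β : ℝ) (hα : 0 < α) (hβ : 0 < β)
    (hs : α + β = 1) (a b : ℝ) :
    let h : ℝ → ℝ := fun u =>
      (1 / (2 * l)) * (Real.log (α + β * Real.exp (l * u)) +
        Real.log (β + α * Real.exp (-l * u)))
    (1 / l) * Real.log (α * Real.exp (l * a) + β * Real.exp (l * b)) =
        (a + b) / 2 + h (b - a) ∧
      h 0 = 0 ∧ (∀ u : ℝ, |deriv h u| ≤ 1) ∧ LipschitzWith 1 h := by
  intro h
  have hpos : ∀ t, 0 < α + β * exp t := fun t => by positivity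
  have h_eq : h = fun u => (1 / l) * log (α + β * exp (l * u)) - u / 2 := by
    funext u
    simp only [h, neg_mul, log_add_mul_exp_neg _ (hpos _).ne']
    field_simp
    ring
  have hderiv : ∀ u, HasDerivAt h (β * exp (l * u) / (α + β * exp (l * u)) - 1 / 2) u := by
    intro u
    rw [h_eq]
    refine (((hasDerivAt_log_add_mul_exp l u (hpos _).ne').const_mul (1 / l)).sub
      ((hasDerivAt_id' u).div_const 2)).congr_deriv ?_
    field_simp
  have hbound : ∀ u, |deriv h u| ≤ 1 := fun u => by
    rw [(hderiv u).deriv]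
    linarith [abs_div_add_sub_half_le hα (by positivity : 0 ≤ β * exp (l * u))]
  refine ⟨?_, ?_, hbound, ?_⟩
  · rw [h_eq, log_mul_exp_add_mul_exp _ _ (hpos _).ne', ← mul_sub]
    field_simp
    ring
  · simp [h, hs, add_comm β α]
  · exact lipschitzWith_of_nnnorm_deriv_le (fun u => (hderiv u).differentiableAt)
      fun u => by simpa [← NNReal.coe_le_coe] using hbound u
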